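/- Let r_n be a Thiele continued fraction on distinct nodes z_1,...,z_n with weights w_1,...,w_n (only nodes z_1,...,z_{n-1} appear in the fraction). Suppose that for some index k with 1 ≤ k ≤ n, the weight w_k satisfies the complementary continued-fraction relation w_k = (z_k - z_{k-1})/(-w_{k-1} + (z_k - z_{k-2})/(-w_{k-2} + ... + (z_k - z_1)/(-w_1 + y_k))) with all intermediate denominators nonzero. Then r_n(z_k) = y_k, i.e., the continued fraction interpolates the value y_k at node z_k. -/
import Mathlib


/-- If the weight `w_k` of a Thiele continued fraction on distinct nodes satisfies the
complementary continued-fraction relation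
`w_k = (z_k - z_{k-1})/(-w_{k-1} + (z_k - z_{k-2})/(⋯ + (z_k - z_1)/(-w_1 + y_k)))`,
with all intermediate denominators nonzero, then `r_n(z_k) = y_k`.
`v` is the tail-first evaluation of the full fraction at the point `z k`, and
`g j` is the `j`-th denominator in the complementary fraction:
`g 1 = -w 1 + y_k`, `g (j+1) = -w (j+1) + (z k - z j)/g j`. -/
theorem thiele_interpolation (n : ℕ) (hn : 1 ≤ n) (w z : ℕ → ℂ) (k : ℕ)
    (hk1 : 1 ≤ k) (hkn : k ≤ n) (yk : ℂ)
    (hdist : ∀ i j, 1 ≤ i → i ≤ n → 1 ≤ j → j ≤ n → i ≠ j → z i ≠ z j)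
    (g : ℕ → ℂ)
    (hg1 : g 1 = -w 1 + yk)
    (hg : ∀ j, 1 ≤ j → j + 1 ≤ k - 1 → g (j + 1) = -w (j + 1) + (z k - z j) / g j)
    (hgne : ∀ j, 1 ≤ j → j ≤ k - 1 → g j ≠ 0)
    (hwk : w k = if k = 1 then yk else (z k - z (k - 1)) / g (k - 1))
    (v : ℕ → ℂ)
    (hvn : v n = w n)
    (hv : ∀ j, 1 ≤ j → j < n → v j = w j + (z k - z j) / v (j + 1))
    (hvne : ∀ j, 2 ≤ j → j ≤ n → v j ≠ 0) :
    v 1 = yk := by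
  have hvk : v k = w k := by
    rcases eq_or_lt_of_le hkn with h | h
    · rw [h, hvn]
    · rw [hv k hk1 h, sub_self, zero_div, add_zero]
  rcases eq_or_lt_of_le hk1 with hk | hk2
  · -- k = 1
    rw [← hk] at hvk hwk
    simpa [hwk] using hvk
  · -- k ≥ 2
    have cancel : ∀ j, 1 ≤ j → j ≤ k - 1 → (z k - z j) / ((z k - z j) / g j) = g j := by
      intro j hj1 hjk
      have hjn : j ≤ n := le_trans (le_trans hjk (Nat.sub_le k 1)) hkn
      have hne : z k - z j ≠ 0 := sub_ne_zero.mpr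
        (hdist k j hk1 hkn hj1 hjn (by omega))
      have hgj : g j ≠ 0 := hgne j hj1 hjk
      field_simp
    have key : ∀ d j, j + d = k - 1 → 1 ≤ j → v j = w j + g j := by
      intro d
      induction d with
      | zero =>
        intro j hj hj1
        simp only [Nat.add_zero] at hj
        subst hj
        have hlt : k - 1 < n := by omega
        rw [hv (k - 1) hj1 hlt]
        have hkk : k - 1 + 1 = k := by omega
        rw [hkk, hvk, hwk, if_neg (by omega)]
        rw [cancel (k - 1) hj1 le_rfl]
      | succ d ih =>
        intro j hj hj1
        have hvj1 : v (j + 1) = w (j + 1) + g (j + 1) := ih (j + 1) (by omega) (by omega)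
        have hgj1 : g (j + 1) = -w (j + 1) + (z k - z j) / g j := hg j hj1 (by omega)
        have hvj1' : v (j + 1) = (z k - z j) / g j := by rw [hvj1, hgj1]; ring
        have hlt : j < n := by omega
        rw [hv j hj1 hlt, hvj1', cancel j hj1 (by omega)]
    have h1 : v 1 = w 1 + g 1 := key (k - 1 - 1) 1 (by omega) le_rfl
    rw [h1, hg1]; ring
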